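/- For every formal Fourier series f and integer n ≥ 1, the operator norm of the truncated branching-Toeplitz matrix dominates that of the standard Toeplitz matrix: ‖T_n(f)‖ ≤ ‖Γ_q^{(n)}[f]‖, where T_n(f) = [\hat{f}(k-l)]_{0 ≤ k,l ≤ n}. -/

import Mathlib

/-- Vertices of the rooted `q`-homogeneous tree, modelled as words over `Fin q`;
the root is the empty word and the children of `w` are the words `k :: w`. -/
abbrev Vertex (q : ℕ) := List (Fin q)

/-- `σ` is an ancestor of `τ` (i.e. `σ ⪯ τ`): `τ = w ++ σ` for some word `w`. -/
def Anc {q : ℕ} (σ τ : Vertex q) : Prop := σ <:+ τ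

/-- Two vertices are comparable (`(σ,τ) ∈ 𝒞`) if one is an ancestor of the other. -/
def Comp {q : ℕ} (σ τ : Vertex q) : Prop := σ <:+ τ ∨ τ <:+ σ

/-- Length of the longest common suffix, i.e. the generation of the last common
ancestor of the two vertices. -/
def lcs {q : ℕ} (σ τ : Vertex q) : ℕ :=
  ((σ.reverse.zip τ.reverse).takeWhile (fun p => decide (p.1 = p.2))).length

/-- The graph distance on the rooted `q`-homogeneous tree. -/
def tdist {q : ℕ} (σ τ : Vertex q) : ℕ := (σ.length - lcs σ τ) + (τ.length - lcs σ τ)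

instance {q : ℕ} (σ τ : Vertex q) : Decidable (Comp σ τ) :=
  inferInstanceAs (Decidable (σ <:+ τ ∨ τ <:+ σ))

/-- The branching-Toeplitz kernel
`Γ_q[f](σ₁,σ₂) = q^{-d(σ₁,σ₂)/2} · f̂(|σ₁|-|σ₂|) · 1_𝒞(σ₁,σ₂)` associated with a
formal Fourier series with coefficients `f̂ : ℤ → ℂ`. -/
noncomputable def btKer {q : ℕ} (f : ℤ → ℂ) (σ₁ σ₂ : Vertex q) : ℂ :=
  if Comp σ₁ σ₂ then
    ((q : ℝ) ^ (-(tdist σ₁ σ₂ : ℝ) / 2) : ℝ) * f ((σ₁.length : ℤ) - σ₂.length) else 0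

/-- The ball `B_n(T_q)` of vertices of generation at most `n`. -/
abbrev Ball (q n : ℕ) := {σ : Vertex q // σ.length ≤ n}

noncomputable instance (q n : ℕ) : Fintype (Ball q n) :=
  (List.finite_length_le (Fin q) n).fintype

/-- The truncated branching-Toeplitz matrix `Γ_q^{(n)}[f]` on `B_n(T_q)`. -/
noncomputable def btMat (q n : ℕ) (f : ℤ → ℂ) : Matrix (Ball q n) (Ball q n) ℂ :=
  fun σ₁ σ₂ => btKer f σ₁.1 σ₂.1

/-- The standard Toeplitz matrix `T_n(f) = [f̂(k-l)]_{0 ≤ k,l ≤ n}`. -/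
def toepMat (n : ℕ) (f : ℤ → ℂ) : Matrix (Fin (n + 1)) (Fin (n + 1)) ℂ :=
  fun k l => f ((k : ℤ) - (l : ℤ))

/-! Let `V : ℂ^{n+1} → ℂ^{B_n(T_q)}` send `e_k` to `q^{-k/2}` times the indicator of generation
`k`. Each vertex of generation `max k l` is comparable to exactly one vertex of generation
`min k l`, at distance `|k - l|`, so there are `q^{max k l}` comparable pairs and their weights
`q^{-k/2} q^{-|k-l|/2} q^{-l/2}` cancel this count: `V* Γ_q^{(n)}[f] V = T_n(f)`. For the unit
impulse `f = δ₀` both `Γ_q^{(n)}[δ₀]` and `T_n(δ₀)` are identities, so `V* V = 1`; hence `V` is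
an isometry and `‖T_n(f)‖ ≤ ‖Γ_q^{(n)}[f]‖`. -/

open Finset Matrix

open scoped Matrix.Norms.L2Operator in
lemma Matrix.l2_opNorm_conjTranspose_mul_mul_le {𝕜 m n : Type*} [RCLike 𝕜] [Fintype m]
    [DecidableEq m] [Fintype n] [DecidableEq n] {V : Matrix m n 𝕜} (hV : Vᴴ * V = 1)
    (A : Matrix m m 𝕜) :
    ‖Vᴴ * A * V‖ ≤ ‖A‖ := by
  have hV1 : ‖V‖ * ‖V‖ ≤ 1 := by
    rw [← l2_opNorm_conjTranspose_mul_self, hV, cstar_norm_def, map_one]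
    exact ContinuousLinearMap.norm_id_le
  calc ‖Vᴴ * A * V‖ ≤ ‖Vᴴ‖ * ‖A‖ * ‖V‖ :=
        (l2_opNorm_mul _ _).trans (by gcongr; exact l2_opNorm_mul _ _)
    _ = ‖A‖ * (‖V‖ * ‖V‖) := by rw [l2_opNorm_conjTranspose]; ring
    _ ≤ ‖A‖ := mul_le_of_le_one_right (norm_nonneg _) hV1

lemma List.length_takeWhile_zip_append_self {α : Type*} [DecidableEq α] (a b : List α) :
    (((a ++ b).zip a).takeWhile fun p => decide (p.1 = p.2)).length = a.length := by
  induction a with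
  | nil => simp
  | cons x t ih => simp [ih]

variable {q n : ℕ}

lemma lcs_comm (σ τ : Vertex q) : lcs σ τ = lcs τ σ := by
  rw [lcs, lcs, ← List.zip_swap, List.takeWhile_map, List.length_map]
  congr 2
  ext p
  simp [eq_comm]

lemma lcs_of_suffix {σ τ : Vertex q} (h : τ <:+ σ) : lcs σ τ = τ.length := by
  obtain ⟨w, rfl⟩ := h
  simpa [lcs] using List.length_takeWhile_zip_append_self τ.reverse w.reverse

lemma comp_iff_suffix_of_length_le {σ τ : Vertex q} (h : τ.length ≤ σ.length) :
    Comp σ τ ↔ τ <:+ σ := by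
  refine ⟨fun hc => hc.elim (fun hst => ?_) id, Or.inr⟩
  rw [hst.eq_of_length (le_antisymm hst.length_le h)]

lemma Comp.symm {σ τ : Vertex q} (h : Comp σ τ) : Comp τ σ := Or.symm h

lemma Comp.eq_of_length_eq {σ τ : Vertex q} (hc : Comp σ τ) (h : σ.length = τ.length) :
    σ = τ :=
  hc.elim (fun hst => hst.eq_of_length h) (fun hts => (hts.eq_of_length h.symm).symm)

lemma tdist_of_comp {σ τ : Vertex q} (h : Comp σ τ) :
    tdist σ τ = max σ.length τ.length - min σ.length τ.length := by
  rcases le_total τ.length σ.length with hl | hl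
  · rw [tdist, lcs_of_suffix ((comp_iff_suffix_of_length_le hl).1 h)]
    omega
  · rw [tdist, lcs_comm, lcs_of_suffix ((comp_iff_suffix_of_length_le hl).1 h.symm)]
    omega

lemma card_filter_length_eq {k : ℕ} (hk : k ≤ n) :
    #{σ : Ball q n | σ.1.length = k} = q ^ k := by
  rw [← Fintype.card_subtype]
  let e : {σ : Ball q n // σ.1.length = k} ≃ List.Vector (Fin q) k :=
    { toFun σ := ⟨σ.1.1, σ.2⟩
      invFun v := ⟨⟨v.1, v.2.trans_le hk⟩, v.2⟩ }
  rw [Fintype.card_congr e, card_vector, Fintype.card_fin]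

lemma card_filter_comp_of_le {k l : ℕ} (hk : k ≤ n) (hlk : l ≤ k) :
    #{p : Ball q n × Ball q n | p.1.1.length = k ∧ p.2.1.length = l ∧ Comp p.1.1 p.2.1} =
      q ^ k := by
  rw [← card_filter_length_eq hk]
  let ancestor (σ : Ball q n) : Ball q n :=
    ⟨σ.1.drop (k - l), (List.drop_suffix _ _).length_le.trans σ.2⟩
  refine card_nbij' Prod.fst (fun σ => (σ, ancestor σ)) ?_ ?_ ?_ ?_
  · intro p hp
    simp_all
  · intro σ hσ
    simp only [coe_filter, Set.mem_ofPred_eq, mem_univ, true_and] at hσ ⊢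
    exact ⟨hσ, by simp [ancestor, hσ]; omega, Or.inr (List.drop_suffix _ _)⟩
  · rintro ⟨σ, τ⟩ hp
    simp only [coe_filter, Set.mem_ofPred_eq, mem_univ, true_and] at hp
    obtain ⟨hσ, hτ, hc⟩ := hp
    have hτσ := List.suffix_iff_eq_drop.1 ((comp_iff_suffix_of_length_le (by omega)).1 hc)
    exact Prod.ext rfl (Subtype.ext (by rw [hτσ, hσ, hτ]))
  · exact fun _ _ => rfl

lemma card_filter_comp {k l : ℕ} (hk : k ≤ n) (hl : l ≤ n) :
    #{p : Ball q n × Ball q n | p.1.1.length = k ∧ p.2.1.length = l ∧ Comp p.1.1 p.2.1} =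
      q ^ max k l := by
  rcases le_total l k with hlk | hkl
  · rw [max_eq_left hlk, card_filter_comp_of_le hk hlk]
  · rw [max_eq_right hkl, ← card_filter_comp_of_le hl hkl]
    refine card_nbij' Prod.swap Prod.swap ?_ ?_ (fun _ _ => rfl) (fun _ _ => rfl) <;>
    · intro p hp
      simp only [coe_filter, Set.mem_ofPred_eq, mem_univ, true_and] at hp ⊢
      exact ⟨hp.2.1, hp.1, hp.2.2.symm⟩

lemma rpow_max_mul_rpow_neg_half {x : ℝ} (hx : 0 < x) (k l : ℕ) :
    x ^ max k l * (x ^ (-(k : ℝ) / 2) * x ^ (-((max k l - min k l : ℕ) : ℝ) / 2) *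
      x ^ (-(l : ℝ) / 2)) = 1 := by
  rw [← Real.rpow_natCast, ← Real.rpow_add hx, ← Real.rpow_add hx, ← Real.rpow_add hx]
  convert Real.rpow_zero x
  push_cast [Nat.cast_sub min_le_max]
  rcases le_total k l with h | h <;> simp [h] <;> ring

noncomputable def generationEmbedding (q n : ℕ) : Matrix (Ball q n) (Fin (n + 1)) ℂ :=
  fun σ k => if σ.1.length = k then (((q : ℝ) ^ (-(k : ℝ) / 2) : ℝ) : ℂ) else 0

lemma star_generationEmbedding_mul_btKer_mul (f : ℤ → ℂ) (σ τ : Ball q n)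
    (k l : Fin (n + 1)) :
    star (generationEmbedding q n σ k) * btKer f σ.1 τ.1 * generationEmbedding q n τ l =
      if σ.1.length = k ∧ τ.1.length = l ∧ Comp σ.1 τ.1 then
        (((q : ℝ) ^ (-(k : ℝ) / 2) *
            (q : ℝ) ^ (-((max (k : ℕ) l - min (k : ℕ) l : ℕ) : ℝ) / 2) *
            (q : ℝ) ^ (-(l : ℝ) / 2) : ℝ) : ℂ) * f (k - l)
      else 0 := by
  by_cases h : σ.1.length = k ∧ τ.1.length = l ∧ Comp σ.1 τ.1
  · obtain ⟨hσ, hτ, hc⟩ := h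
    simp [generationEmbedding, btKer, hσ, hτ, hc, tdist_of_comp hc]
    ring
  · rw [if_neg h]
    simp only [generationEmbedding, btKer]
    split_ifs <;> simp_all

theorem conjTranspose_generationEmbedding_mul_btMat_mul (hq : 0 < q) (f : ℤ → ℂ) :
    (generationEmbedding q n)ᴴ * btMat q n f * generationEmbedding q n = toepMat n f := by
  ext k l
  simp only [mul_apply, conjTranspose_apply, Finset.sum_mul]
  rw [sum_comm, ← Fintype.sum_prod_type']
  simp only [btMat, star_generationEmbedding_mul_btKer_mul, ← sum_filter, sum_const,
    card_filter_comp k.is_le l.is_le, nsmul_eq_mul]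
  rw [← mul_assoc, toepMat]
  convert one_mul _
  exact_mod_cast rpow_max_mul_rpow_neg_half (Nat.cast_pos.2 hq) k l

lemma toepMat_single_zero : toepMat n (Pi.single 0 1) = 1 := by
  ext k l
  simp [toepMat, Pi.single_apply, one_apply, sub_eq_zero, Fin.val_inj]

lemma btMat_single_zero : btMat q n (Pi.single 0 1) = 1 := by
  ext σ τ
  by_cases h : σ = τ
  · subst h
    have hc : Comp σ.1 σ.1 := Or.inl (List.suffix_refl σ.1)
    simp [btMat, btKer, hc, tdist_of_comp hc]
  · simp only [btMat, btKer, Pi.single_apply, sub_eq_zero, Nat.cast_inj, one_apply_ne h]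
    split_ifs with hc hl
    · exact absurd (Subtype.ext (hc.eq_of_length_eq hl)) h
    all_goals simp

lemma conjTranspose_generationEmbedding_mul_self (hq : 0 < q) :
    (generationEmbedding q n)ᴴ * generationEmbedding q n = 1 := by
  simpa [btMat_single_zero, toepMat_single_zero] using
    conjTranspose_generationEmbedding_mul_btMat_mul (n := n) hq (Pi.single 0 1)

theorem toepMat_norm_le_btMat_norm_general (q n : ℕ) (hq : 2 ≤ q) (f : ℤ → ℂ) :
    ‖Matrix.toEuclideanCLM (𝕜 := ℂ) (toepMat n f)‖ ≤
      ‖Matrix.toEuclideanCLM (𝕜 := ℂ) (btMat q n f)‖ := by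
  have hq0 : 0 < q := by omega
  rw [← conjTranspose_generationEmbedding_mul_btMat_mul hq0 f]
  open scoped Matrix.Norms.L2Operator in
  exact l2_opNorm_conjTranspose_mul_mul_le (conjTranspose_generationEmbedding_mul_self hq0) _

/-- The ℓ²-operator norm of the standard Toeplitz matrix `T_n(f)`
is dominated by that of the truncated branching-Toeplitz matrix `Γ_q^{(n)}[f]`. -/
theorem toepMat_norm_le_btMat_norm (q n : ℕ) (hq : 2 ≤ q) (hn : 1 ≤ n) (f : ℤ → ℂ) :
    ‖Matrix.toEuclideanCLM (𝕜 := ℂ) (toepMat n f)‖ ≤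
      ‖Matrix.toEuclideanCLM (𝕜 := ℂ) (btMat q n f)‖ :=
  toepMat_norm_le_btMat_norm_general q n hq f
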